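/- arXiv:2406.07150 — 2 statements merged into one kernel-verified Lean document; each statement's English description precedes it below -/
import Mathlib

section
/- For square-integrable random variables A, B and a measurable event C, |Cov(A·1_C, B)| ≤ E[A^4]^{1/4} · Var(B)^{1/2} · P(C)^{1/4}, assuming A has finite fourth moment. -/
/-!
Write `A·1_C = 1_C A`. Cauchy–Schwarz bounds the covariance by `√Var(1_C A) · √Var B`, and
`Var(1_C A) ≤ E[A² 1_C] ≤ √E[A⁴] · √P(C)` by Cauchy–Schwarz once more.
-/

open MeasureTheory ProbabilityTheory

section

variable {α : Type*} [MeasurableSpace α] {μ : Measure α}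

theorem abs_integral_mul_le_sqrt_mul_sqrt {f g : α → ℝ} (hf : MemLp f 2 μ)
    (hg : MemLp g 2 μ) :
    |∫ a, f a * g a ∂μ| ≤ √(∫ a, f a ^ 2 ∂μ) * √(∫ a, g a ^ 2 ∂μ) := by
  have holder := integral_mul_norm_le_Lp_mul_Lq (μ := μ) Real.HolderConjugate.two_two
    (by simpa using hf) (by simpa using hg)
  simp only [Real.norm_eq_abs, Real.rpow_two, sq_abs, ← Real.sqrt_eq_rpow] at holder
  calc |∫ a, f a * g a ∂μ| ≤ ∫ a, |f a| * |g a| ∂μ := by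
        simpa only [Real.norm_eq_abs, abs_mul] using
          norm_integral_le_integral_norm (fun a => f a * g a)
    _ ≤ _ := holder

theorem abs_covariance_le_sqrt_variance_mul_sqrt_variance [IsFiniteMeasure μ] {X Y : α → ℝ}
    (hX : MemLp X 2 μ) (hY : MemLp Y 2 μ) :
    |cov[X, Y; μ]| ≤ √(Var[X; μ]) * √(Var[Y; μ]) := by
  rw [variance_eq_integral hX.aemeasurable, variance_eq_integral hY.aemeasurable]
  exact abs_integral_mul_le_sqrt_mul_sqrt (hX.sub (memLp_const _)) (hY.sub (memLp_const _))

theorem integral_sq_indicator_le [IsFiniteMeasure μ] {f : α → ℝ} {s : Set α}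
    (hf : MemLp f 4 μ) (hs : MeasurableSet s) :
    ∫ a, s.indicator f a ^ 2 ∂μ ≤ √(∫ a, f a ^ 4 ∂μ) * √(μ.real s) := by
  have hf4 : Integrable (fun a => f a ^ 4) μ := by
    simpa [Real.norm_eq_abs, (by decide : Even 4).pow_abs] using
      hf.integrable_norm_pow (p := 4) (by norm_num)
  have hf_sq : MemLp (fun a => f a ^ 2) 2 μ :=
    (memLp_two_iff_integrable_sq (f := fun a => f a ^ 2) (hf.1.pow 2)).2
      (by simpa only [← pow_mul] using hf4)
  have h1s : MemLp (s.indicator (1 : α → ℝ)) 2 μ := (memLp_const 1).indicator hs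
  have cs := abs_integral_mul_le_sqrt_mul_sqrt hf_sq h1s
  have hsq : ∀ a, s.indicator f a ^ 2 = f a ^ 2 * s.indicator 1 a := by
    intro a; by_cases ha : a ∈ s <;> simp [ha]
  have h1sq : ∀ a, s.indicator (1 : α → ℝ) a ^ 2 = s.indicator 1 a := by
    intro a; by_cases ha : a ∈ s <;> simp [ha]
  simp only [← pow_mul, h1sq, integral_indicator_one hs] at cs
  simpa only [hsq] using (le_abs_self _).trans cs

end

theorem Real.sqrt_sqrt_eq_rpow {x : ℝ} (hx : 0 ≤ x) : √√x = x ^ ((1 : ℝ) / 4) := by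
  rw [Real.sqrt_eq_rpow, Real.sqrt_eq_rpow, ← Real.rpow_mul hx]
  norm_num

theorem stmt_3 {Ω : Type*} [MeasurableSpace Ω] (P : Measure Ω) [IsProbabilityMeasure P]
    (A B : Ω → ℝ) (C : Set Ω) (hC : MeasurableSet C)
    (hA : MemLp A 4 P) (hB : MemLp B 2 P) :
    |(∫ ω, (A ω * Set.indicator C (fun _ => (1 : ℝ)) ω) * B ω ∂P)
        - (∫ ω, A ω * Set.indicator C (fun _ => (1 : ℝ)) ω ∂P) * (∫ ω, B ω ∂P)| ≤
      (∫ ω, A ω ^ 4 ∂P) ^ ((1 : ℝ) / 4)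
        * ((∫ ω, B ω ^ 2 ∂P) - (∫ ω, B ω ∂P) ^ 2) ^ ((1 : ℝ) / 2)
        * (P C).toReal ^ ((1 : ℝ) / 4) := by
  have hAC : (fun ω => A ω * C.indicator (fun _ => (1 : ℝ)) ω) = C.indicator A := by
    ext ω; by_cases hω : ω ∈ C <;> simp [hω]
  have hX : MemLp (C.indicator A) 2 P := (hA.indicator hC).mono_exponent (by norm_num)
  have hcov : (∫ ω, (A ω * C.indicator (fun _ => (1 : ℝ)) ω) * B ω ∂P)
      - (∫ ω, A ω * C.indicator (fun _ => (1 : ℝ)) ω ∂P) * (∫ ω, B ω ∂P)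
      = cov[C.indicator A, B; P] := by
    rw [covariance_eq_sub hX hB, ← hAC]; rfl
  have hvar : (∫ ω, B ω ^ 2 ∂P) - (∫ ω, B ω ∂P) ^ 2 = Var[B; P] := by
    rw [variance_eq_sub hB]; rfl
  have hVarX : √(Var[C.indicator A; P])
      ≤ (∫ ω, A ω ^ 4 ∂P) ^ ((1 : ℝ) / 4) * (P C).toReal ^ ((1 : ℝ) / 4) := by
    calc √(Var[C.indicator A; P]) ≤ √(√(∫ ω, A ω ^ 4 ∂P) * √(P.real C)) :=
          Real.sqrt_le_sqrt <|
            (variance_le_expectation_sq hX.1).trans (integral_sq_indicator_le hA hC)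
      _ = _ := by
          rw [Real.sqrt_mul (Real.sqrt_nonneg _),
            Real.sqrt_sqrt_eq_rpow (integral_nonneg fun ω => by positivity),
            Real.sqrt_sqrt_eq_rpow measureReal_nonneg, measureReal_def]
  rw [hcov, hvar, ← Real.sqrt_eq_rpow, mul_right_comm]
  calc |cov[C.indicator A, B; P]| ≤ √(Var[C.indicator A; P]) * √(Var[B; P]) :=
        abs_covariance_le_sqrt_variance_mul_sqrt_variance hX hB
    _ ≤ _ := mul_le_mul_of_nonneg_right hVarX (Real.sqrt_nonneg _)
end

section
/- The map Φ(S₁, S₂) = (1/(s² + Δt²))·(s² S₁ + Δt² S₂ + Δt S₁ × S₂, s² S₂ + Δt² S₁ + Δt S₂ × S₁), with s² = (1 + S₁·S₂)/2, maps pairs of unit vectors to pairs of unit vectors: if |S₁| = |S₂| = 1 and S₁·S₂ ≠ -1, then both components of Φ(S₁, S₂) have norm 1. -/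
/-!
The cross product `S₁ × S₂` is orthogonal to `S₁` and `S₂`, and by Lagrange's identity
`|S₁ × S₂|² = 1 - c²` with `c = S₁·S₂`. Hence the numerator `s S₁ + Δt² S₂ + Δt S₁ × S₂` has
squared norm `s² + Δt⁴ + 2 s Δt² c + Δt² (1 - c²)`, which equals `(s + Δt²)²` exactly because
`s = (1 + c)/2` gives `2 s c + 1 - c² = 2 s`. The second component of the map is the first one
with `S₁` and `S₂` exchanged.
-/

/-- Dot product on `ℝ³`. -/
def dot3 (a b : Fin 3 → ℝ) : ℝ := a 0 * b 0 + a 1 * b 1 + a 2 * b 2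

/-- The Krajnik-Prosen update map. -/
noncomputable def KPmap (Δt : ℝ) (S₁ S₂ : Fin 3 → ℝ) : (Fin 3 → ℝ) × (Fin 3 → ℝ) :=
  let s2 : ℝ := (1 + dot3 S₁ S₂) / 2
  ((1 / (s2 + Δt ^ 2)) • (s2 • S₁ + Δt ^ 2 • S₂ + Δt • (crossProduct S₁ S₂)),
   (1 / (s2 + Δt ^ 2)) • (s2 • S₂ + Δt ^ 2 • S₁ + Δt • (crossProduct S₂ S₁)))

open Matrix

lemma dot3_eq_dotProduct (a b : Fin 3 → ℝ) : dot3 a b = a ⬝ᵥ b := by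
  simp [dot3, dotProduct, Fin.sum_univ_three]

lemma dot3_comm (a b : Fin 3 → ℝ) : dot3 a b = dot3 b a := by
  simp only [dot3]
  ring

lemma KPmap_snd (Δt : ℝ) (S₁ S₂ : Fin 3 → ℝ) : (KPmap Δt S₁ S₂).2 = (KPmap Δt S₂ S₁).1 := by
  simp only [KPmap, dot3_comm S₁ S₂]

lemma neg_one_le_dotProduct {n : Type*} [Fintype n] {u v : n → ℝ} (hu : u ⬝ᵥ u = 1)
    (hv : v ⬝ᵥ v = 1) : -1 ≤ u ⬝ᵥ v := by
  have h := dotProduct_self_star_nonneg (u + v)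
  simp only [star_trivial, add_dotProduct, dotProduct_add, hu, hv, dotProduct_comm v u] at h
  linarith

lemma dotProduct_self_add_smul_cross (u v : Fin 3 → ℝ) (α β t : ℝ) :
    (α • u + β • v + t • u ⨯₃ v) ⬝ᵥ (α • u + β • v + t • u ⨯₃ v) =
      α ^ 2 * (u ⬝ᵥ u) + β ^ 2 * (v ⬝ᵥ v) + 2 * α * β * (u ⬝ᵥ v)
        + t ^ 2 * ((u ⬝ᵥ u) * (v ⬝ᵥ v) - (u ⬝ᵥ v) ^ 2) := by
  simp only [add_dotProduct, dotProduct_add, smul_dotProduct, dotProduct_smul, smul_eq_mul,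
    dot_self_cross, dot_cross_self, cross_dot_cross, dotProduct_comm v u, dotProduct_comm (u ⨯₃ v)]
  ring

lemma dotProduct_self_KPmap_numerator {u v : Fin 3 → ℝ} (hu : u ⬝ᵥ u = 1) (hv : v ⬝ᵥ v = 1)
    (t : ℝ) :
    let s := (1 + u ⬝ᵥ v) / 2
    (s • u + t ^ 2 • v + t • u ⨯₃ v) ⬝ᵥ (s • u + t ^ 2 • v + t • u ⨯₃ v) = (s + t ^ 2) ^ 2 := by
  intro s
  rw [dotProduct_self_add_smul_cross, hu, hv]
  ring

lemma dot3_KPmap_fst_self (Δt : ℝ) {S₁ S₂ : Fin 3 → ℝ} (h₁ : dot3 S₁ S₁ = 1)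
    (h₂ : dot3 S₂ S₂ = 1) (h₁₂ : dot3 S₁ S₂ ≠ -1) :
    dot3 (KPmap Δt S₁ S₂).1 (KPmap Δt S₁ S₂).1 = 1 := by
  rw [dot3_eq_dotProduct] at h₁ h₂ h₁₂ ⊢
  have hs : 0 < (1 + S₁ ⬝ᵥ S₂) / 2 + Δt ^ 2 := by
    have := lt_of_le_of_ne (neg_one_le_dotProduct h₁ h₂) h₁₂.symm
    nlinarith [sq_nonneg Δt]
  simp only [KPmap, dot3_eq_dotProduct, smul_dotProduct, dotProduct_smul, smul_eq_mul,
    dotProduct_self_KPmap_numerator h₁ h₂]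
  generalize (1 + S₁ ⬝ᵥ S₂) / 2 + Δt ^ 2 = c at hs ⊢
  field_simp

theorem stmt_12_general (Δt : ℝ) (S₁ S₂ : Fin 3 → ℝ)
    (h₁ : dot3 S₁ S₁ = 1) (h₂ : dot3 S₂ S₂ = 1) (h₁₂ : dot3 S₁ S₂ ≠ -1) :
    dot3 (KPmap Δt S₁ S₂).1 (KPmap Δt S₁ S₂).1 = 1 ∧
    dot3 (KPmap Δt S₁ S₂).2 (KPmap Δt S₁ S₂).2 = 1 := by
  have h₂₁ : dot3 S₂ S₁ ≠ -1 := by rwa [dot3_comm]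
  rw [KPmap_snd]
  exact ⟨dot3_KPmap_fst_self Δt h₁ h₂ h₁₂, dot3_KPmap_fst_self Δt h₂ h₁ h₂₁⟩

theorem stmt_12 (Δt : ℝ) (hΔt : 0 < Δt) (S₁ S₂ : Fin 3 → ℝ)
    (h₁ : dot3 S₁ S₁ = 1) (h₂ : dot3 S₂ S₂ = 1) (h₁₂ : dot3 S₁ S₂ ≠ -1) :
    dot3 (KPmap Δt S₁ S₂).1 (KPmap Δt S₁ S₂).1 = 1 ∧
    dot3 (KPmap Δt S₁ S₂).2 (KPmap Δt S₁ S₂).2 = 1 :=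
  stmt_12_general Δt S₁ S₂ h₁ h₂ h₁₂
end
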